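/- Stability of τ_M under single insertion: let β ∈ S_n, let 0 ≤ k ≤ n, and let β' = 1⧢_k β (shift β up by 1 and insert the letter 1 at position k+1). Then { τ_M(β')(i) : 0 ≤ i ≤ k } = { τ_M(β)(i) : 0 ≤ i ≤ k }. -/

import Mathlib

open Finset

namespace Paper

/-- The word of `σ` at 0-based position `i`, with 0-based values (`0` outside range). -/
def wrd {n : ℕ} (σ : Equiv.Perm (Fin n)) (i : ℕ) : ℕ :=
  if h : i < n then (σ ⟨i, h⟩ : ℕ) else 0

/-- The descent set of `σ`, in 1-based positions: `{ i ∈ {1,…,n-1} | σ(i) > σ(i+1) }`. -/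
def Des {n : ℕ} (σ : Equiv.Perm (Fin n)) : Finset ℕ :=
  (Finset.Ioo 0 n).filter fun i => wrd σ i < wrd σ (i - 1)

/-- The major index: the sum of the (1-based) descent positions. -/
def maj {n : ℕ} (σ : Equiv.Perm (Fin n)) : ℕ := ∑ i ∈ Des σ, i

/-- The number of descents. -/
def des {n : ℕ} (σ : Equiv.Perm (Fin n)) : ℕ := (Des σ).card

/-- The number of inversions. -/
def inv {n : ℕ} (σ : Equiv.Perm (Fin n)) : ℕ :=
  (Finset.univ.filter fun p : Fin n × Fin n => p.1 < p.2 ∧ σ p.2 < σ p.1).card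

/-- The Lehmer code, as a function `ℕ → ℕ` (0-based index, zero outside `[0, n)`):
`Lc σ i = #{ j > i | σ(j) < σ(i) }`. -/
def Lc {n : ℕ} (σ : Equiv.Perm (Fin n)) (i : ℕ) : ℕ :=
  if h : i < n then (Finset.univ.filter fun j : Fin n => i < (j : ℕ) ∧ σ j < σ ⟨i, h⟩).card
  else 0

/-- The inversion code (invcode) is the Lehmer code of the inverse. -/
def Ic {n : ℕ} (σ : Equiv.Perm (Fin n)) : ℕ → ℕ := Lc σ⁻¹

/-- The word of a permutation, with 1-based values. -/
def word {n : ℕ} (σ : Equiv.Perm (Fin n)) : List ℕ := List.ofFn fun i => (σ i : ℕ) + 1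

/-- The major index of a word: the sum of the 1-based positions `t` with `w_t > w_{t+1}`. -/
def majL (l : List ℕ) : ℕ :=
  ∑ t ∈ Finset.range (l.length - 1), if l.getD (t + 1) 0 < l.getD t 0 then t + 1 else 0

/-- The major code, as a function `ℕ → ℕ` (0-based index `i`, i.e. paper's `m_{i+1}`):
`m_i = maj(σ^{(i)}) - maj(σ^{(i+1)})` where `σ^{(i)}` keeps only the letters `≥ i`. -/
def Mc {n : ℕ} (σ : Equiv.Perm (Fin n)) (i : ℕ) : ℕ :=
  majL ((word σ).filter fun x => decide (i + 1 ≤ x)) -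
    majL ((word σ).filter fun x => decide (i + 2 ≤ x))

/-- The saillance code, as a function `ℕ → ℕ` (0-based index `i`, i.e. about the letter of
0-based value `i`): the number of letters of `σ` that are `≥` the rightmost letter located to
the left of `i` and greater than `i` (0 if there is no such letter). -/
def Sc {n : ℕ} (σ : Equiv.Perm (Fin n)) (i : ℕ) : ℕ :=
  if h : i < n then
    let L := Finset.univ.filter fun j : Fin n => j < σ⁻¹ ⟨i, h⟩ ∧ (⟨i, h⟩ : Fin n) < σ j
    if hL : L.Nonempty then n - (σ (L.max' hL) : ℕ) else 0
  else 0

/-- Sub-diagonal sequences, as functions `ℕ → ℕ` supported on `[0, n)` with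
`c_i ≤ n - 1 - i` there (0-based; i.e. `0 ≤ c_i ≤ n - i` in 1-based indexing). -/
def SubDiag (n : ℕ) : Set (ℕ → ℕ) :=
  {c | (∀ i, i < n → c i + i < n) ∧ ∀ i, n ≤ i → c i = 0}

/-- The permutation `τ_M(β)` of `{0,…,n}`: `τ_M(β)(i) = des(β) - j` if `i` is the `j`-th
descent of `β`, and `τ_M(β)(i) = des(β) + j - 1` if `i` is the `j`-th rise (position `0`
counting as a rise). -/
def tauM {n : ℕ} (β : Equiv.Perm (Fin n)) (i : ℕ) : ℕ :=
  if i ∈ Des β then des β - ((Des β).filter fun d => d ≤ i).card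
  else des β + ((Finset.range (i + 1)).filter fun r => r ∉ Des β).card - 1

/-- The permutation `τ_S(β)` of `{0,…,n}`: `τ_S(β)(0) = 0` and `τ_S(β)(i) = n + 1 - β(i)`
(1-based values) for `1 ≤ i ≤ n`. -/
def tauS {n : ℕ} (β : Equiv.Perm (Fin n)) (i : ℕ) : ℕ :=
  if h : 1 ≤ i ∧ i ≤ n then n - (β ⟨i - 1, by omega⟩ : ℕ) else 0

/-- The complete homogeneous symmetric polynomial `h_k(X_m)` in the variables
`x_0, …, x_m`. -/
noncomputable def hpoly (k m : ℕ) : MvPolynomial ℕ ℤ :=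
  ∑ f ∈ Finset.univ.filter (fun f : Fin k → Fin (m + 1) => ∀ a b : Fin k, a ≤ b → f a ≤ f b),
    ∏ t : Fin k, MvPolynomial.X ((f t : ℕ))

/-- The (proper) descent set of a composition `I = (i_1,…,i_r)`:
`{i_1, i_1+i_2, …, i_1+⋯+i_{r-1}}`. -/
def DesComp (I : List ℕ) : Finset ℕ :=
  (Finset.range (I.length - 1)).image fun k => (I.take (k + 1)).sum

end Paper

/-! `τ_M(β)(i)` is the number of descents of `β` beyond `i` when `i` is a descent, and that
number plus `i` otherwise. Hence `τ_M(β)` maps `{0, …, k}` onto the interval of length `k + 1`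
starting at the number of descents beyond `k`. Inserting the smallest letter at position `k + 1`
creates no descent there and shifts the descents beyond it by one, so this number, and with it
the interval, is unchanged. -/

namespace Paper

def tauOfSet (D : Finset ℕ) (i : ℕ) : ℕ :=
  if i ∈ D then #D - #{d ∈ D | d ≤ i} else #D + #{r ∈ range (i + 1) | r ∉ D} - 1

theorem tauM_eq_tauOfSet {n : ℕ} (β : Equiv.Perm (Fin n)) : tauM β = tauOfSet (Des β) := rfl

section tauOfSet

variable (D : Finset ℕ)

theorem card_filter_le_add_card_filter_lt (i : ℕ) :
    #{d ∈ D | d ≤ i} + #{d ∈ D | i < d} = #D := by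
  simpa only [not_le] using card_filter_add_card_filter_not (s := D) (fun d => d ≤ i)

theorem tauOfSet_of_mem {i : ℕ} (h : i ∈ D) : tauOfSet D i = #{d ∈ D | i < d} := by
  have := card_filter_le_add_card_filter_lt D i
  rw [tauOfSet, if_pos h]
  omega

theorem tauOfSet_of_notMem {i : ℕ} (h : i ∉ D) : tauOfSet D i = #{d ∈ D | i < d} + i := by
  have hrange : #{r ∈ range (i + 1) | r ∉ D} + #{d ∈ D | d ≤ i} = i + 1 := by
    have hmem : {r ∈ range (i + 1) | r ∈ D} = {d ∈ D | d ≤ i} := by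
      ext r; simp [and_comm]
    have := card_filter_add_card_filter_not (s := range (i + 1)) (· ∉ D)
    simp only [not_not, card_range, hmem] at this
    exact this
  have := card_filter_le_add_card_filter_lt D i
  rw [tauOfSet, if_neg h]
  omega

theorem image_range_tauOfSet (k : ℕ) :
    (range (k + 1)).image (tauOfSet D) = Icc #{d ∈ D | k < d} (#{d ∈ D | k < d} + k) := by
  induction k with
  | zero =>
    by_cases h : 0 ∈ D
    · simp [tauOfSet_of_mem D h]
    · simp [tauOfSet_of_notMem D h]
  | succ k ih =>
    rw [range_add_one, image_insert, ih]
    by_cases h : k + 1 ∈ D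
    · have hsplit : {d ∈ D | k < d} = insert (k + 1) {d ∈ D | k + 1 < d} := by
        ext d; simp only [mem_insert, mem_filter]; constructor
        · rintro ⟨hd, hkd⟩
          exact (eq_or_ne d (k + 1)).imp id fun hne => ⟨hd, by omega⟩
        · rintro (rfl | ⟨hd, hkd⟩)
          exacts [⟨h, by omega⟩, ⟨hd, by omega⟩]
      rw [tauOfSet_of_mem D h, hsplit, card_insert_of_notMem (by simp)]
      ext v; simp only [mem_insert, mem_Icc]; omega
    · have hsame : {d ∈ D | k < d} = {d ∈ D | k + 1 < d} := by
        ext d; simp only [mem_filter]; constructor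
        · rintro ⟨hd, hkd⟩
          have hne : d ≠ k + 1 := fun e => h (e ▸ hd)
          exact ⟨hd, by omega⟩
        · rintro ⟨hd, hkd⟩
          exact ⟨hd, by omega⟩
      rw [tauOfSet_of_notMem D h, hsame]
      ext v; simp only [mem_insert, mem_Icc]; omega

end tauOfSet

theorem mem_Des_iff {n : ℕ} (σ : Equiv.Perm (Fin n)) {i : ℕ} :
    i ∈ Des σ ↔ 0 < i ∧ i < n ∧ wrd σ i < wrd σ (i - 1) := by
  simp [Des, and_assoc]

theorem filter_lt_Des_eq_map_of_insert_zero {n k : ℕ} (σ : Equiv.Perm (Fin n))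
    (τ : Equiv.Perm (Fin (n + 1))) (hzero : wrd τ k = 0)
    (hshift : ∀ i, k < i → i < n + 1 → wrd τ i = wrd σ (i - 1) + 1) :
    {d ∈ Des τ | k < d} = {d ∈ Des σ | k < d}.map (addRightEmbedding 1) := by
  ext d
  simp only [mem_filter, mem_map, addRightEmbedding_apply, mem_Des_iff]
  constructor
  · rintro ⟨⟨hd0, hdn, hdesc⟩, hkd⟩
    have hne : d - 1 ≠ k := fun e => by rw [e, hzero] at hdesc; omega
    rw [hshift d hkd hdn, hshift (d - 1) (by omega) (by omega)] at hdesc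
    exact ⟨d - 1, ⟨⟨by omega, by omega, by omega⟩, by omega⟩, by omega⟩
  · rintro ⟨e, ⟨⟨he0, hen, hdesc⟩, hke⟩, rfl⟩
    refine ⟨⟨by omega, by omega, ?_⟩, by omega⟩
    rw [Nat.add_sub_cancel, hshift (e + 1) (by omega) (by omega), hshift e hke (by omega),
      Nat.add_sub_cancel]
    omega

end Paper

/-- Stability of `τ_M` under single insertion: if `βi = 1⧢_k β`, then
`{τ_M(βi)(i) | 0 ≤ i ≤ k} = {τ_M(β)(i) | 0 ≤ i ≤ k}`. -/
theorem tauM_stable_single_insertion (n : ℕ) (β : Equiv.Perm (Fin n)) (k : ℕ) (hk : k ≤ n)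
    (βi : Equiv.Perm (Fin (n + 1)))
    (heq : ∀ j : Fin (n + 1), (j : ℕ) = k → (βi j : ℕ) = 0)
    (hgt : ∀ (j : Fin (n + 1)) (hj : k < (j : ℕ)),
      (βi j : ℕ) = (β ⟨(j : ℕ) - 1, by have := j.isLt; omega⟩ : ℕ) + 1) :
    (Finset.range (k + 1)).image (Paper.tauM βi) =
      (Finset.range (k + 1)).image (Paper.tauM β) := by
  have hzero : Paper.wrd βi k = 0 := by
    rw [Paper.wrd, dif_pos (by omega)]
    exact heq _ rfl
  have hshift : ∀ i, k < i → i < n + 1 → Paper.wrd βi i = Paper.wrd β (i - 1) + 1 :=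
    fun i hki hin => by
      rw [Paper.wrd, Paper.wrd, dif_pos hin, dif_pos (by omega)]
      exact hgt ⟨i, hin⟩ hki
  rw [Paper.tauM_eq_tauOfSet, Paper.tauM_eq_tauOfSet, Paper.image_range_tauOfSet,
    Paper.image_range_tauOfSet, Paper.filter_lt_Des_eq_map_of_insert_zero β βi hzero hshift,
    card_map]
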